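/- arXiv:1302.4618 — 8 statements merged into one kernel-verified Lean document; each statement's English description precedes it below -/
import Mathlib

section
/- Let Φ = {φ_n}_{n=1}^N ⊆ ℂ^M and suppose the map A : ℂ^M/𝕋 → ℝ^N given by (A(x))(n) = |⟨x, φ_n⟩|² is injective modulo the unit circle. Then the map B : ℂ^M/{±1} → ℂ^N defined by (B(x))(n) = ⟨x, φ_n⟩² is injective modulo sign, i.e., ⟨x,φ_n⟩² = ⟨y,φ_n⟩² for all n implies y = x or y = -x. -/
/-!
Equal squares `⟨x, φₙ⟩² = ⟨y, φₙ⟩²` give equal intensities, so `y = c x` with `|c| = 1`. Any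
nonzero coefficient `⟨x, φₙ⟩` then forces `c² = 1`. If all coefficients vanish, `x` has the
intensities of `0`, and injectivity of `A` gives `x = 0`.
-/

open scoped InnerProductSpace

variable {𝕜 E ι : Type*} [RCLike 𝕜] [NormedAddCommGroup E] [InnerProductSpace 𝕜 E]

variable (𝕜) in
/-- The intensity map `x ↦ (|⟪x, Φ i⟫|²)ᵢ` (the paper's `A`) is injective modulo the unit circle. -/
def IntensityInjectiveModCircle (Φ : ι → E) : Prop :=
  ∀ x y : E, (∀ i, ‖⟪x, Φ i⟫_𝕜‖ ^ 2 = ‖⟪y, Φ i⟫_𝕜‖ ^ 2) → ∃ c : 𝕜, ‖c‖ = 1 ∧ y = c • x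

namespace IntensityInjectiveModCircle

variable {Φ : ι → E}

theorem eq_zero_of_inner_eq_zero (hΦ : IntensityInjectiveModCircle 𝕜 Φ) {x : E}
    (hx : ∀ i, ⟪x, Φ i⟫_𝕜 = 0) : x = 0 := by
  obtain ⟨c, hc, hcx⟩ := hΦ x 0 fun i => by simp [hx i]
  have hc₀ : c ≠ 0 := by rintro rfl; simp at hc
  exact (smul_eq_zero.mp hcx.symm).resolve_left hc₀

end IntensityInjectiveModCircle

theorem sq_eq_one_of_inner_sq_eq_inner_smul_sq {c : 𝕜} {x v : E} (hx : ⟪x, v⟫_𝕜 ≠ 0)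
    (h : ⟪x, v⟫_𝕜 ^ 2 = ⟪c • x, v⟫_𝕜 ^ 2) : c ^ 2 = 1 := by
  rw [inner_smul_left, mul_pow] at h
  have hconj : (starRingEnd 𝕜 c) ^ 2 = 1 :=
    mul_right_cancel₀ (pow_ne_zero 2 hx) (by rw [one_mul, ← h])
  simpa using congrArg (starRingEnd 𝕜) hconj

theorem stmt_6 (M N : ℕ) (Φ : Fin N → EuclideanSpace ℂ (Fin M))
    (hinj : ∀ x y : EuclideanSpace ℂ (Fin M),
        (∀ n, ‖(inner ℂ x (Φ n) : ℂ)‖ ^ 2 = ‖(inner ℂ y (Φ n) : ℂ)‖ ^ 2) →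
        ∃ c : ℂ, ‖c‖ = 1 ∧ y = c • x) :
    ∀ x y : EuclideanSpace ℂ (Fin M),
      (∀ n, (inner ℂ x (Φ n) : ℂ) ^ 2 = (inner ℂ y (Φ n) : ℂ) ^ 2) → y = x ∨ y = -x := by
  have hΦ : IntensityInjectiveModCircle ℂ Φ := hinj
  intro x y h
  obtain ⟨c, -, rfl⟩ := hΦ x y fun n => by rw [← norm_pow, h n, norm_pow]
  by_cases hx : ∀ n, ⟪x, Φ n⟫_ℂ = 0
  · simp [hΦ.eq_zero_of_inner_eq_zero hx]
  · push Not at hx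
    obtain ⟨n, hn⟩ := hx
    rcases sq_eq_one_iff.mp (sq_eq_one_of_inner_sq_eq_inner_smul_sq hn (h n)) with rfl | rfl <;> simp
end

section
/- Let Φ = {φ_n}_{n=1}^N ⊆ ℂ^M and suppose the map A defined by (A(x))(n) = |⟨x, φ_n⟩|² is injective on ℂ^M modulo the unit circle. Then Φ satisfies the complement property: for every S ⊆ {1,…,N}, either {φ_n}_{n∈S} or {φ_n}_{n∈Sᶜ} spans ℂ^M. -/
/-!
If both `Φ '' S` and `Φ '' Sᶜ` fail to span, pick nonzero `u ⊥ Φ '' S` and `v ⊥ Φ '' Sᶜ`.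
Then `u + v` and `u - v` have the same intensity measurements, so `u - v = c • (u + v)`,
i.e. `(1 - c) • u = (1 + c) • v`. This vector is orthogonal to every `Φ n`, hence has the
measurements of `0` and vanishes; as `1 - c` and `1 + c` cannot both vanish, `u = 0` or `v = 0`.
-/

open Submodule

variable (𝕜 : Type*) {E ι : Type*} [RCLike 𝕜] [NormedAddCommGroup E] [InnerProductSpace 𝕜 E]

def InjectiveModPhase (Φ : ι → E) : Prop :=
  ∀ x y : E, (∀ n, ‖(inner 𝕜 x (Φ n) : 𝕜)‖ ^ 2 = ‖(inner 𝕜 y (Φ n) : 𝕜)‖ ^ 2) →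
    ∃ c : 𝕜, ‖c‖ = 1 ∧ y = c • x

variable {𝕜}

lemma inner_eq_zero_of_mem_orthogonal_span_image {Φ : ι → E} {S : Set ι} {u : E}
    (hu : u ∈ (span 𝕜 (Φ '' S))ᗮ) {n : ι} (hn : n ∈ S) : inner 𝕜 u (Φ n) = 0 :=
  inner_left_of_mem_orthogonal (subset_span (Set.mem_image_of_mem Φ hn)) hu

namespace InjectiveModPhase

variable {Φ : ι → E}

lemma eq_zero_of_forall_inner_eq_zero (hΦ : InjectiveModPhase 𝕜 Φ) {x : E}
    (hx : ∀ n, inner 𝕜 x (Φ n) = 0) : x = 0 := by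
  obtain ⟨c, hc, hcx⟩ := hΦ x 0 fun n => by simp [hx n]
  have hc0 : c ≠ 0 := by rintro rfl; simp at hc
  exact (smul_eq_zero.mp hcx.symm).resolve_left hc0

lemma eq_zero_or_eq_zero_of_mem_orthogonal (hΦ : InjectiveModPhase 𝕜 Φ) (S : Set ι) {u v : E}
    (hu : u ∈ (span 𝕜 (Φ '' S))ᗮ) (hv : v ∈ (span 𝕜 (Φ '' Sᶜ))ᗮ) : u = 0 ∨ v = 0 := by
  have hu' {n} (hn : n ∈ S) := inner_eq_zero_of_mem_orthogonal_span_image hu hn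
  have hv' {n} (hn : n ∈ Sᶜ) := inner_eq_zero_of_mem_orthogonal_span_image hv hn
  have hsame : ∀ n, ‖(inner 𝕜 (u + v) (Φ n) : 𝕜)‖ ^ 2 = ‖(inner 𝕜 (u - v) (Φ n) : 𝕜)‖ ^ 2 := by
    intro n
    by_cases hn : n ∈ S
    · rw [inner_add_left, inner_sub_left, hu' hn, zero_add, zero_sub, norm_neg]
    · rw [inner_add_left, inner_sub_left, hv' hn, add_zero, sub_zero]
  obtain ⟨c, -, hc⟩ := hΦ (u + v) (u - v) hsame
  have hw : (1 - c) • u = (1 + c) • v := by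
    rw [← sub_eq_zero] at hc ⊢
    linear_combination (norm := module) hc
  have hw0 : (1 - c) • u = 0 := hΦ.eq_zero_of_forall_inner_eq_zero fun n => by
    by_cases hn : n ∈ S
    · rw [inner_smul_left, hu' hn, mul_zero]
    · rw [hw, inner_smul_left, hv' hn, mul_zero]
  rcases smul_eq_zero.mp hw0 with hc1 | hu0
  · rw [hw0, eq_comm, smul_eq_zero, show 1 + c = 2 by linear_combination -hc1] at hw
    exact .inr (hw.resolve_left two_ne_zero)
  · exact .inl hu0

theorem span_eq_top_or_span_compl_eq_top [FiniteDimensional 𝕜 E]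
    (hΦ : InjectiveModPhase 𝕜 Φ) (S : Set ι) :
    span 𝕜 (Φ '' S) = ⊤ ∨ span 𝕜 (Φ '' Sᶜ) = ⊤ := by
  by_contra! h
  obtain ⟨u, hu, hu0⟩ := (Submodule.ne_bot_iff _).mp (mt orthogonal_eq_bot_iff.mp h.1)
  obtain ⟨v, hv, hv0⟩ := (Submodule.ne_bot_iff _).mp (mt orthogonal_eq_bot_iff.mp h.2)
  exact (hΦ.eq_zero_or_eq_zero_of_mem_orthogonal S hu hv).elim hu0 hv0

end InjectiveModPhase

theorem stmt_7 (M N : ℕ) (Φ : Fin N → EuclideanSpace ℂ (Fin M))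
    (hinj : ∀ x y : EuclideanSpace ℂ (Fin M),
        (∀ n, ‖(inner ℂ x (Φ n) : ℂ)‖ ^ 2 = ‖(inner ℂ y (Φ n) : ℂ)‖ ^ 2) →
        ∃ c : ℂ, ‖c‖ = 1 ∧ y = c • x) :
    ∀ S : Set (Fin N),
      Submodule.span ℂ (Φ '' S) = ⊤ ∨ Submodule.span ℂ (Φ '' Sᶜ) = ⊤ :=
  InjectiveModPhase.span_eq_top_or_span_compl_eq_top hinj
end

section
/- Let Φ = {φ_n}_{n=1}^N ⊆ ℂ^M, define the super analysis operator 𝐀 on M×M complex self-adjoint matrices by (𝐀H)(n) = ⟨H, φ_n φ_n*⟩_HS = trace(φ_n φ_n* H). Then the intensity measurement map A(x) = (|⟨x,φ_n⟩|²)_n is not injective modulo 𝕋 if and only if the null space of 𝐀 contains a nonzero self-adjoint matrix of rank 1 or rank 2. -/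
/-!
Since `⟨x x*, φ φ*⟩ = |⟨x, φ⟩|²` and `x x* = y y*` exactly when `y ∈ 𝕋 x`, a pair `x, y` witnessing
non-injectivity gives the nonzero null vector `x x* - y y*` of `𝐀`, of rank at most two.
Conversely, let `H ≠ 0` be self-adjoint of rank at most two with `φₙ* H φₙ = 0` for all `n`.
If `H` has eigenvalues of both signs, the spectral decomposition writes it as `x x* - y y*`,
and then `A x = A y` although `x x* ≠ y y*`. Otherwise `H` or `-H` is positive semidefinite, so
`φₙ* H φₙ = 0` forces `H φₙ = 0`: every nonzero vector in the range of `H` is orthogonal to all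
`φₙ`, hence has the same measurements as `0`.
-/

open Matrix
open scoped ComplexOrder

namespace Matrix

variable {n 𝕜 : Type*} [RCLike 𝕜]

theorem isHermitian_vecMulVec_star_self (x : n → 𝕜) : (vecMulVec x (star x)).IsHermitian := by
  ext i j
  simp [vecMulVec_apply, mul_comm]

theorem vecMulVec_star_smul (c : 𝕜) (x : n → 𝕜) :
    vecMulVec (c • x) (star (c • x)) = (‖c‖ ^ 2 : 𝕜) • vecMulVec x (star x) := by
  ext i j
  simp [vecMulVec_apply, ← RCLike.mul_conj]
  ring

theorem rank_add_le {m K : Type*} [Fintype n] [Field K] (A B : Matrix m n K) :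
    (A + B).rank ≤ A.rank + B.rank := by
  rw [rank, rank, rank, mulVecLin_add]
  exact (Submodule.finrank_mono (LinearMap.range_add_le _ _)).trans
    (Submodule.finrank_add_le_finrank_add_finrank _ _)

theorem rank_vecMulVec_sub_vecMulVec_le {m K : Type*} [Fintype n] [Field K] (w y : m → K)
    (v z : n → K) : (vecMulVec w v - vecMulVec y z).rank ≤ 2 := by
  rw [sub_eq_add_neg, ← neg_vecMulVec]
  exact (rank_add_le _ _).trans (add_le_add (rank_vecMulVec_le _ _) (rank_vecMulVec_le _ _))

variable [Fintype n]

theorem trace_vecMulVec_star_mul (φ : n → 𝕜) (H : Matrix n n 𝕜) :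
    (vecMulVec φ (star φ) * H).trace = star φ ⬝ᵥ H *ᵥ φ := by
  rw [vecMulVec_mul, trace_vecMulVec, dotProduct_comm, dotProduct_mulVec]

theorem star_dotProduct_vecMulVec_star_mulVec (φ x : n → 𝕜) :
    star φ ⬝ᵥ vecMulVec x (star x) *ᵥ φ = (‖star φ ⬝ᵥ x‖ ^ 2 : 𝕜) := by
  rw [vecMulVec_mulVec, op_smul_eq_smul, dotProduct_smul, smul_eq_mul, star_dotProduct,
    RCLike.star_def, RCLike.conj_mul]

theorem star_dotProduct_vecMulVec_sub_mulVec_eq_zero_iff (φ x y : n → 𝕜) :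
    star φ ⬝ᵥ (vecMulVec x (star x) - vecMulVec y (star y)) *ᵥ φ = 0 ↔
      ‖star φ ⬝ᵥ x‖ ^ 2 = ‖star φ ⬝ᵥ y‖ ^ 2 := by
  rw [sub_mulVec, dotProduct_sub, star_dotProduct_vecMulVec_star_mulVec,
    star_dotProduct_vecMulVec_star_mulVec, sub_eq_zero]
  norm_cast

theorem vecMulVec_star_self_eq_iff {x y : n → 𝕜} :
    vecMulVec x (star x) = vecMulVec y (star y) ↔ ∃ c : 𝕜, ‖c‖ = 1 ∧ y = c • x := by
  refine ⟨fun h => ?_, fun ⟨c, hc, hy⟩ => by rw [hy, vecMulVec_star_smul, hc]; simp⟩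
  rcases eq_or_ne x 0 with rfl | hx
  · refine ⟨1, norm_one, ?_⟩
    simpa [eq_comm (a := (0 : Matrix n n 𝕜))] using h
  have hnorm : ‖star x ⬝ᵥ x‖ = ‖star x ⬝ᵥ y‖ := by
    have := star_dotProduct_vecMulVec_star_mulVec x x
    rw [h, star_dotProduct_vecMulVec_star_mulVec] at this
    exact (pow_left_inj₀ (norm_nonneg _) (norm_nonneg _) two_ne_zero).mp
      (by exact_mod_cast this.symm)
  have hsmul : (star x ⬝ᵥ x) • x = (star y ⬝ᵥ x) • y := by
    simpa [vecMulVec_mulVec] using congrArg (· *ᵥ x) h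
  have ha : star x ⬝ᵥ x ≠ 0 := mt dotProduct_star_self_eq_zero.mp hx
  have hb : star y ⬝ᵥ x ≠ 0 := by
    rintro hb
    rw [hb, zero_smul, smul_eq_zero] at hsmul
    exact hsmul.elim ha hx
  refine ⟨(star x ⬝ᵥ x) / (star y ⬝ᵥ x), ?_, ?_⟩
  · rw [norm_div, star_dotProduct y, norm_star, hnorm, div_self (norm_ne_zero_iff.mpr ?_)]
    rwa [← norm_ne_zero_iff, ← hnorm, norm_ne_zero_iff]
  · rw [div_eq_inv_mul, mul_smul, hsmul, inv_smul_smul₀ hb]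

theorem PosSemidef.exists_ne_zero_forall_star_dotProduct_eq_zero {ι : Type*} {A : Matrix n n 𝕜}
    (hA : A.PosSemidef) (h0 : A ≠ 0) {φ : ι → n → 𝕜}
    (hφ : ∀ i, star (φ i) ⬝ᵥ A *ᵥ φ i = 0) :
    ∃ x ≠ 0, ∀ i, star (φ i) ⬝ᵥ x = 0 := by
  classical
  obtain ⟨v, hv⟩ : ∃ v, A *ᵥ v ≠ 0 := by
    by_contra! h
    exact h0 (ext fun i j => by simpa using congrFun (h (Pi.single j 1)) i)
  refine ⟨A *ᵥ v, hv, fun i => ?_⟩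
  rw [dotProduct_mulVec, ← hA.isHermitian.eq, ← star_mulVec,
    (hA.dotProduct_mulVec_zero_iff _).mp (hφ i), star_zero, zero_dotProduct]

variable [DecidableEq n]

theorem IsHermitian.one_le_rank {A : Matrix n n 𝕜} (hA : A.IsHermitian) (h : A ≠ 0) :
    1 ≤ A.rank := by
  rw [hA.rank_eq_card_non_zero_eigs, Nat.one_le_iff_ne_zero, ← Nat.pos_iff_ne_zero,
    Fintype.card_pos_iff]
  obtain ⟨i, hi⟩ := Function.ne_iff.mp (mt hA.eigenvalues_eq_zero_iff.mp h)
  exact ⟨⟨i, hi⟩⟩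

theorem IsHermitian.eq_sum_eigenvalues_smul_vecMulVec {A : Matrix n n 𝕜} (hA : A.IsHermitian) :
    A = ∑ i, hA.eigenvalues i •
      vecMulVec ⇑(hA.eigenvectorBasis i) (star ⇑(hA.eigenvectorBasis i)) := by
  conv_lhs => rw [hA.spectral_theorem, Unitary.conjStarAlgAut_apply]
  ext j k
  simp only [mul_apply, diagonal_apply, mul_ite, mul_zero, Finset.sum_ite_eq', Finset.mem_univ,
    if_true, Matrix.sum_apply, smul_apply, vecMulVec_apply, RCLike.real_smul_eq_coe_mul]
  exact Finset.sum_congr rfl fun i _ => by simp [star_apply]; ring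

theorem IsHermitian.posSemidef_neg_iff_eigenvalues_nonpos {A : Matrix n n 𝕜}
    (hA : A.IsHermitian) : (-A).PosSemidef ↔ hA.eigenvalues ≤ 0 := by
  conv_lhs => rw [hA.spectral_theorem, ← map_neg, diagonal_neg]
  simp [Unitary.isUnit_coe.posSemidef_star_right_conjugate_iff, Pi.le_def]

theorem IsHermitian.posSemidef_or_posSemidef_neg_or_exists {A : Matrix n n 𝕜}
    (hA : A.IsHermitian) :
    A.PosSemidef ∨ (-A).PosSemidef ∨ ∃ p q, 0 < hA.eigenvalues p ∧ hA.eigenvalues q < 0 := by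
  simp only [hA.posSemidef_iff_eigenvalues_nonneg, hA.posSemidef_neg_iff_eigenvalues_nonpos,
    Pi.le_def, Pi.zero_apply]
  by_contra! h
  obtain ⟨⟨q, hq⟩, ⟨p, hp⟩, h⟩ := h
  exact (h p q hp).not_gt hq

theorem IsHermitian.exists_eq_vecMulVec_sub_vecMulVec {A : Matrix n n 𝕜} (hA : A.IsHermitian)
    (hrank : A.rank ≤ 2) {p q : n} (hp : 0 < hA.eigenvalues p) (hq : hA.eigenvalues q < 0) :
    ∃ x y : n → 𝕜, A = vecMulVec x (star x) - vecMulVec y (star y) := by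
  have hpq : p ≠ q := by rintro rfl; linarith
  have hzero : ∀ i, i ≠ p ∧ i ≠ q → hA.eigenvalues i = 0 := by
    rintro i ⟨hip, hiq⟩
    by_contra hi
    have : 2 < Fintype.card {i // hA.eigenvalues i ≠ 0} :=
      Fintype.two_lt_card_iff.mpr ⟨⟨p, hp.ne'⟩, ⟨q, hq.ne⟩, ⟨i, hi⟩, by simpa using hpq,
        by simpa using hip.symm, by simpa using hiq.symm⟩
    rw [← hA.rank_eq_card_non_zero_eigs] at this
    omega
  refine ⟨(√(hA.eigenvalues p) : 𝕜) • ⇑(hA.eigenvectorBasis p),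
    (√(-hA.eigenvalues q) : 𝕜) • ⇑(hA.eigenvectorBasis q), ?_⟩
  conv_lhs => rw [hA.eq_sum_eigenvalues_smul_vecMulVec]
  rw [Fintype.sum_eq_add p q hpq fun i hi => by rw [hzero i hi, zero_smul], vecMulVec_star_smul,
    vecMulVec_star_smul]
  simp only [RCLike.norm_ofReal, abs_of_nonneg (Real.sqrt_nonneg _), ← RCLike.ofReal_pow,
    Real.sq_sqrt hp.le, Real.sq_sqrt (neg_nonneg.mpr hq.le), RCLike.real_smul_eq_coe_smul (K := 𝕜)]
  simp [sub_eq_add_neg]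

end Matrix

theorem stmt_9 (M N : ℕ) (Φ : Fin N → Fin M → ℂ) :
    (¬ ∀ x y : Fin M → ℂ,
        (∀ n, ‖star (Φ n) ⬝ᵥ x‖ ^ 2 = ‖star (Φ n) ⬝ᵥ y‖ ^ 2) →
        ∃ c : ℂ, ‖c‖ = 1 ∧ y = c • x)
      ↔ ∃ H : Matrix (Fin M) (Fin M) ℂ, H.IsHermitian ∧ H ≠ 0 ∧
          (H.rank = 1 ∨ H.rank = 2) ∧
          ∀ n, (Matrix.vecMulVec (Φ n) (star (Φ n)) * H).trace = 0 := by
  simp only [trace_vecMulVec_star_mul, ← vecMulVec_star_self_eq_iff, not_forall, exists_prop]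
  constructor
  · rintro ⟨x, y, hmeas, hne⟩
    have hH := (isHermitian_vecMulVec_star_self x).sub (isHermitian_vecMulVec_star_self y)
    have hH0 := sub_ne_zero.mpr hne
    refine ⟨_, hH, hH0, ?_, fun n =>
      (star_dotProduct_vecMulVec_sub_mulVec_eq_zero_iff _ x y).mpr (hmeas n)⟩
    have := hH.one_le_rank hH0
    have := rank_vecMulVec_sub_vecMulVec_le x y (star x) (star y)
    omega
  · rintro ⟨H, hH, hH0, hrank, hnull⟩
    rcases hH.posSemidef_or_posSemidef_neg_or_exists with hpos | hneg | ⟨p, q, hp, hq⟩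
    · obtain ⟨x, hx, hxΦ⟩ := hpos.exists_ne_zero_forall_star_dotProduct_eq_zero hH0 hnull
      exact ⟨x, 0, by simp [hxΦ], by simpa using hx⟩
    · obtain ⟨x, hx, hxΦ⟩ := hneg.exists_ne_zero_forall_star_dotProduct_eq_zero
        (neg_ne_zero.mpr hH0) (by simpa [neg_mulVec] using hnull)
      exact ⟨x, 0, by simp [hxΦ], by simpa using hx⟩
    · obtain ⟨x, y, rfl⟩ := hH.exists_eq_vecMulVec_sub_vecMulVec (by omega) hp hq
      exact ⟨x, y, fun n => (star_dotProduct_vecMulVec_sub_mulVec_eq_zero_iff _ x y).mp (hnull n),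
        sub_ne_zero.mp hH0⟩
end

section
/- Let Φ = {φ_n}_{n=1}^N ⊆ ℂ² with N < 4. Then the map A : ℂ²/𝕋 → ℝ^N defined by (A(x))(n) = |⟨x,φ_n⟩|² is not injective modulo the unit circle. -/
/-!
Take `u ≠ 0` orthogonal to `φ₂`, and `x = u + v`, `y = u - v`. Since
`‖⟪u + v, φ⟫‖² - ‖⟪u - v, φ⟫‖² = 4 Re (⟪φ, u⟫ conj ⟪φ, v⟫)`, the measurements of `x` and `y` agree
as soon as `v` lies in the kernel of the real-linear map `v ↦ (Re (⟪φₙ, u⟫ conj ⟪φₙ, v⟫))_{n = 0, 1}`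
(at `φ₂` the cross term vanishes). That kernel has real dimension at least `4 - 2 = 2`, so it contains
some `v ∉ ℝ • (i u)`. But `u - v = c (u + v)` with `|c| = 1` forces `v = (1 - c) / (1 + c) • u`, and
this Cayley transform of `c` is purely imaginary.
-/

open Module Complex
open scoped InnerProductSpace

theorem LinearMap.exists_apply_eq_zero_notMem_span_singleton {K V W : Type*} [DivisionRing K]
    [AddCommGroup V] [Module K V] [AddCommGroup W] [Module K W]
    [FiniteDimensional K V] [FiniteDimensional K W]
    (f : V →ₗ[K] W) (h : finrank K W + 1 < finrank K V) (w : V) :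
    ∃ v, f v = 0 ∧ v ∉ K ∙ w := by
  by_contra! hker
  have hle : LinearMap.ker f ≤ K ∙ w := fun v hv => hker v hv
  have hspan : finrank K (K ∙ w) ≤ 1 := by
    simpa using finrank_span_le_card (R := K) ({w} : Set V)
  have hrange := Submodule.finrank_le (LinearMap.range f)
  have := f.finrank_range_add_finrank_ker
  have := Submodule.finrank_mono hle
  omega

theorem exists_ne_zero_inner_eq_zero {𝕜 E : Type*} [RCLike 𝕜] [NormedAddCommGroup E]
    [InnerProductSpace 𝕜 E] [FiniteDimensional 𝕜 E] (h : 1 < finrank 𝕜 E) (v : E) :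
    ∃ u ≠ (0 : E), ⟪v, u⟫_𝕜 = 0 := by
  have hspan : finrank 𝕜 (𝕜 ∙ v) ≤ 1 := by
    simpa using finrank_span_le_card (R := 𝕜) ({v} : Set E)
  have hsum := (𝕜 ∙ v).finrank_add_finrank_orthogonal
  obtain ⟨u, hu, hu0⟩ := Submodule.exists_mem_ne_zero_of_ne_bot (p := (𝕜 ∙ v)ᗮ) fun hbot => by
    rw [hbot, finrank_bot] at hsum
    omega
  exact ⟨u, hu0, Submodule.mem_orthogonal_singleton_iff_inner_right.mp hu⟩

theorem Complex.re_one_sub_div_one_add_eq_zero {c : ℂ} (hc : ‖c‖ = 1) :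
    ((1 - c) / (1 + c)).re = 0 := by
  have hnormSq : c.re * c.re + c.im * c.im = 1 := by
    rw [← normSq_apply, normSq_eq_norm_sq, hc, one_pow]
  rw [div_re, ← add_div]
  simp only [sub_re, add_re, sub_im, add_im, one_re, one_im]
  rw [div_eq_zero_iff]
  left
  linear_combination -hnormSq

theorem mem_span_I_smul_of_sub_eq_smul_add {E : Type*} [AddCommGroup E] [Module ℂ E]
    {u v : E} {c : ℂ} (hu : u ≠ 0) (hc : ‖c‖ = 1) (h : u - v = c • (u + v)) :
    v ∈ ℝ ∙ (I • u) := by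
  have hcv : (1 + c) • v = (1 - c) • u := by
    rw [add_smul, sub_smul, one_smul, one_smul]
    linear_combination (norm := module) -h
  have hc₁ : 1 + c ≠ 0 := by
    rintro hc₁
    obtain rfl : c = -1 := by linear_combination hc₁
    rw [hc₁, zero_smul, eq_comm, smul_eq_zero] at hcv
    norm_num at hcv
    exact hu hcv
  have hv : v = ((1 - c) / (1 + c)) • u := by
    rw [div_eq_inv_mul, mul_smul, ← hcv, smul_smul, inv_mul_cancel₀ hc₁, one_smul]
  refine Submodule.mem_span_singleton.mpr ⟨((1 - c) / (1 + c)).im, ?_⟩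
  rw [hv, ← Complex.coe_smul, smul_smul]
  congr 1
  apply Complex.ext <;> simp [re_one_sub_div_one_add_eq_zero hc]

theorem norm_inner_add_eq_norm_inner_sub {E : Type*} [NormedAddCommGroup E] [InnerProductSpace ℂ E]
    {φ u v : E} (h : ⟪⟪φ, u⟫_ℂ, ⟪φ, v⟫_ℂ⟫_ℝ = 0) : ‖⟪u + v, φ⟫_ℂ‖ = ‖⟪u - v, φ⟫_ℂ‖ := by
  rw [norm_inner_symm, norm_inner_symm (u - v), inner_add_right, inner_sub_right]
  rw [real_inner_comm] at h
  exact (norm_sub_eq_norm_add h).symm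

def PhaseRetrievable {ι E : Type*} [NormedAddCommGroup E] [InnerProductSpace ℂ E]
    (Φ : ι → E) : Prop :=
  ∀ x y : E, (∀ n, ‖⟪x, Φ n⟫_ℂ‖ ^ 2 = ‖⟪y, Φ n⟫_ℂ‖ ^ 2) → ∃ c : ℂ, ‖c‖ = 1 ∧ y = c • x

theorem PhaseRetrievable.of_comp {ι κ E : Type*} [NormedAddCommGroup E] [InnerProductSpace ℂ E]
    {Ψ : κ → E} (f : ι → κ) (h : PhaseRetrievable (Ψ ∘ f)) : PhaseRetrievable Ψ :=
  fun x y hxy => h x y fun n => hxy (f n)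

section

variable {E : Type*} [NormedAddCommGroup E] [InnerProductSpace ℂ E]

noncomputable def crossTerms {ι : Type*} (Φ : ι → E) (u : E) : E →ₗ[ℝ] ι → ℝ :=
  LinearMap.pi fun n => innerₛₗ ℝ ⟪Φ n, u⟫_ℂ ∘ₗ (innerₛₗ ℂ (Φ n)).restrictScalars ℝ

theorem finrank_real_of_finrank_complex_eq_two (hE : finrank ℂ E = 2) : finrank ℝ E = 4 := by
  rw [← finrank_mul_finrank ℝ ℂ E, Complex.finrank_real_complex, hE]

theorem not_phaseRetrievable_fin_three (hE : finrank ℂ E = 2) (Ψ : Fin 3 → E) :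
    ¬ PhaseRetrievable Ψ := by
  have : FiniteDimensional ℂ E := Module.finite_of_finrank_pos (by omega)
  have : FiniteDimensional ℝ E := FiniteDimensional.trans ℝ ℂ E
  obtain ⟨u, hu, hΨu⟩ := exists_ne_zero_inner_eq_zero (𝕜 := ℂ) (by omega) (Ψ 2)
  obtain ⟨v, hv, hvu⟩ := (crossTerms (Ψ ∘ Fin.castSucc) u).exists_apply_eq_zero_notMem_span_singleton
    (by simp [finrank_real_of_finrank_complex_eq_two hE]) (I • u)
  intro hΨ
  obtain ⟨c, hc, hcuv⟩ := hΨ (u + v) (u - v) fun n => by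
    refine congrArg (· ^ 2) (norm_inner_add_eq_norm_inner_sub ?_)
    cases n using Fin.lastCases with
    | last => simp [show Fin.last 2 = 2 from rfl, hΨu]
    | cast i => exact congrFun hv i
  exact hvu (mem_span_I_smul_of_sub_eq_smul_add hu hc hcuv)

end

theorem stmt_10 (N : ℕ) (hN : N < 4) (Φ : Fin N → EuclideanSpace ℂ (Fin 2)) :
    ¬ ∀ x y : EuclideanSpace ℂ (Fin 2),
        (∀ n, ‖(inner ℂ x (Φ n) : ℂ)‖ ^ 2 = ‖(inner ℂ y (Φ n) : ℂ)‖ ^ 2) →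
        ∃ c : ℂ, ‖c‖ = 1 ∧ y = c • x := by
  let Ψ : Fin 3 → EuclideanSpace ℂ (Fin 2) := fun k => if h : (k : ℕ) < N then Φ ⟨k, h⟩ else 0
  have hΦ : Ψ ∘ Fin.castLE (by omega) = Φ := by
    funext n
    simp [Ψ]
  intro hΦret
  rw [← hΦ] at hΦret
  exact not_phaseRetrievable_fin_three finrank_euclideanSpace_fin Ψ (.of_comp _ hΦret)
end

section
/- Let Φ = {φ_n}_{n=1}^N ⊆ ℂ³ with N < 8. Then the map A(x) = (|⟨x,φ_n⟩|²)_{n=1}^N is not injective on ℂ³ modulo the unit circle. -/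
/-! The map sending a Hermitian `3 × 3` matrix `Q` to `(⟪φₙ, Q φₙ⟫)ₙ` is real-linear from a
9-dimensional space to `ℝᴺ`, so for `N < 8` its kernel contains two independent Hermitian matrices
`Q₁, Q₂`. In odd dimension `det (-Q) = -det Q`, so the intermediate value theorem on the circle
`t ↦ cos t • Q₁ + sin t • Q₂` yields a nonzero singular `Q` in the kernel; it has at most two
nonzero eigenvalues. If they are `λ > 0 > -ν`, with unit eigenvectors `u, v`, then `√λ u` and
`√ν v` have the same measurements; if `Q` is semidefinite, an eigenvector with nonzero eigenvalue
is orthogonal to every `φₙ` and has the same measurements as `0`. In both cases the two vectors are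
orthogonal, hence do not differ by a phase. -/

open Complex Module Matrix
open scoped InnerProductSpace

lemma re_inner_apply_self_eq_sum {𝕜 F ι : Type*} [RCLike 𝕜] [NormedAddCommGroup F]
    [InnerProductSpace 𝕜 F] [Fintype ι] (T : F →ₗ[𝕜] F) (b : OrthonormalBasis ι 𝕜 F)
    (μ : ι → ℝ) (hT : ∀ i, T (b i) = (μ i : 𝕜) • b i) (x : F) :
    RCLike.re ⟪x, T x⟫_𝕜 = ∑ i, μ i * ‖⟪b i, x⟫_𝕜‖ ^ 2 := by
  have hTx : T x = ∑ i, (⟪b i, x⟫_𝕜 * μ i) • b i := by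
    conv_lhs => rw [← b.sum_repr' x]
    simp only [map_sum, map_smul, hT, smul_smul]
  rw [hTx, inner_sum, map_sum]
  refine Finset.sum_congr rfl fun i _ => ?_
  rw [inner_smul_right, ← inner_conj_symm x, mul_comm, ← mul_assoc, RCLike.conj_mul]
  norm_cast
  ring

theorem exists_ne_zero_eq_zero_of_odd {V : Type*} [AddCommGroup V] [Module ℝ V]
    [TopologicalSpace V] [ContinuousAdd V] [ContinuousSMul ℝ V] {f : V → ℝ} (hf : Continuous f)
    (hodd : ∀ v, f (-v) = -f v) {u v : V} (huv : LinearIndependent ℝ ![u, v]) :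
    ∃ w ≠ 0, f w = 0 := by
  set g : ℝ → ℝ := fun t => f (Real.cos t • u + Real.sin t • v)
  have hg : Continuous g := by fun_prop
  have hzero : (0 : ℝ) ∈ Set.uIcc (g 0) (g Real.pi) := by
    simp only [g, Real.cos_zero, Real.sin_zero, Real.cos_pi, Real.sin_pi, one_smul, zero_smul,
      add_zero, neg_one_smul, hodd, Set.mem_uIcc]
    rcases le_total (f u) 0 with h | h
    · exact Or.inl ⟨h, by linarith⟩
    · exact Or.inr ⟨by linarith, h⟩
  obtain ⟨t, -, ht⟩ := intermediate_value_uIcc hg.continuousOn hzero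
  refine ⟨Real.cos t • u + Real.sin t • v, fun h0 => ?_, ht⟩
  obtain ⟨hcos, hsin⟩ := LinearIndependent.pair_iff.mp huv _ _ h0
  simpa [hcos, hsin] using Real.cos_sq_add_sin_sq t

section PhaseRetrieval

variable {E ι : Type*} [NormedAddCommGroup E] [InnerProductSpace ℂ E]

def AllowsPhaseRetrieval (Φ : ι → E) : Prop :=
  ∀ x y : E, (∀ k, ‖⟪x, Φ k⟫_ℂ‖ ^ 2 = ‖⟪y, Φ k⟫_ℂ‖ ^ 2) → ∃ c : ℂ, ‖c‖ = 1 ∧ y = c • x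

variable {Φ : ι → E}

theorem not_allowsPhaseRetrieval_of_inner_eq_zero {x y : E} (hx : x ≠ 0) (hxy : ⟪x, y⟫_ℂ = 0)
    (h : ∀ k, ‖⟪x, Φ k⟫_ℂ‖ ^ 2 = ‖⟪y, Φ k⟫_ℂ‖ ^ 2) : ¬ AllowsPhaseRetrieval Φ := by
  intro hΦ
  obtain ⟨c, hc, rfl⟩ := hΦ x y h
  rw [inner_smul_right, mul_eq_zero, inner_self_eq_zero] at hxy
  rcases hxy with rfl | rfl
  · simp at hc
  · exact hx rfl

lemma norm_inner_sqrt_smul_left_sq {a : ℝ} (ha : 0 ≤ a) (x y : E) :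
    ‖⟪(√a : ℂ) • x, y⟫_ℂ‖ ^ 2 = a * ‖⟪x, y⟫_ℂ‖ ^ 2 := by
  rw [inner_smul_left, norm_mul, Complex.norm_conj, Complex.norm_real,
    Real.norm_of_nonneg (Real.sqrt_nonneg a), mul_pow, Real.sq_sqrt ha]

variable {κ : Type*} [Fintype κ] (b : OrthonormalBasis κ ℂ E) {μ : κ → ℝ}

theorem not_allowsPhaseRetrieval_of_sum_eq_zero_of_nonneg (hμ : 0 ≤ μ) {j : κ} (hj : μ j ≠ 0)
    (h : ∀ k, ∑ i, μ i * ‖⟪b i, Φ k⟫_ℂ‖ ^ 2 = 0) : ¬ AllowsPhaseRetrieval Φ := by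
  refine not_allowsPhaseRetrieval_of_inner_eq_zero (b.orthonormal.ne_zero j) (inner_zero_right _)
    fun k => ?_
  have hterm := (Finset.sum_eq_zero_iff_of_nonneg fun i _ => mul_nonneg (hμ i) (sq_nonneg _)).mp
    (h k) j (Finset.mem_univ j)
  simpa [hj] using hterm

theorem not_allowsPhaseRetrieval_of_sum_eq_zero_of_pos_of_neg {j l : κ} (hj : 0 < μ j)
    (hl : μ l < 0) (hμ : ∀ i, i ≠ j → i ≠ l → μ i = 0)
    (h : ∀ k, ∑ i, μ i * ‖⟪b i, Φ k⟫_ℂ‖ ^ 2 = 0) : ¬ AllowsPhaseRetrieval Φ := by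
  have hjl : j ≠ l := by rintro rfl; linarith
  refine not_allowsPhaseRetrieval_of_inner_eq_zero (x := (√(μ j) : ℂ) • b j)
    (y := (√(-μ l) : ℂ) • b l) ?_ ?_ fun k => ?_
  · exact smul_ne_zero (by simpa [Real.sqrt_eq_zero'] using hj) (b.orthonormal.ne_zero j)
  · simp [b.orthonormal.inner_eq_zero hjl]
  · rw [norm_inner_sqrt_smul_left_sq hj.le, norm_inner_sqrt_smul_left_sq (by linarith)]
    have hk := h k
    rw [Finset.sum_eq_add j l hjl (fun i _ hi => by simp [hμ i hi.1 hi.2]) (by simp)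
      (by simp)] at hk
    linarith

theorem not_allowsPhaseRetrieval_of_sum_eq_zero (hμ : μ ≠ 0)
    (hsupp : Fintype.card {i // μ i ≠ 0} ≤ 2) (h : ∀ k, ∑ i, μ i * ‖⟪b i, Φ k⟫_ℂ‖ ^ 2 = 0) :
    ¬ AllowsPhaseRetrieval Φ := by
  by_cases hmixed : ∃ j l, 0 < μ j ∧ μ l < 0
  · obtain ⟨j, l, hj, hl⟩ := hmixed
    refine not_allowsPhaseRetrieval_of_sum_eq_zero_of_pos_of_neg b hj hl (fun i hij hil => ?_) h
    by_contra hi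
    refine hsupp.not_gt (Fintype.two_lt_card_iff.mpr ⟨⟨i, hi⟩, ⟨j, hj.ne'⟩, ⟨l, hl.ne⟩, ?_⟩)
    simp only [ne_eq, Subtype.mk.injEq]
    exact ⟨hij, hil, by rintro rfl; linarith⟩
  · simp only [not_exists, not_and, not_lt] at hmixed
    obtain ⟨j, hj⟩ := Function.ne_iff.mp hμ
    rcases hj.lt_or_gt with hneg | hpos
    · refine not_allowsPhaseRetrieval_of_sum_eq_zero_of_nonneg b (μ := -μ) (j := j)
        (fun i => ?_) (by simpa using hj) (fun k => by simp [h k])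
      simpa using not_lt.mp fun hi => (hmixed i j hi).not_gt hneg
    · exact not_allowsPhaseRetrieval_of_sum_eq_zero_of_nonneg b (hmixed j · hpos) hj h

end PhaseRetrieval

section Hermitian

variable {n ι : Type*}

-- `P ↦ (P + Pᵀ) + i (P - Pᵀ)` is a real-linear bijection onto the Hermitian matrices, so these
-- form a real vector space of dimension `n²`.
def Matrix.hermitianOfReal : Matrix n n ℝ →ₗ[ℝ] Matrix n n ℂ where
  toFun P := of fun i j => ⟨P i j + P j i, P i j - P j i⟩
  map_add' P R := by
    ext i j
    apply Complex.ext <;> simp only [add_apply, of_apply, add_re, add_im] <;> ring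
  map_smul' r P := by
    ext i j
    apply Complex.ext <;>
      simp only [smul_apply, of_apply, RingHom.id_apply, real_smul, re_ofReal_mul,
        im_ofReal_mul] <;> ring

lemma Matrix.isHermitian_hermitianOfReal (P : Matrix n n ℝ) :
    (hermitianOfReal P).IsHermitian := by
  ext i j
  simp [hermitianOfReal, Complex.ext_iff, add_comm]

lemma Matrix.hermitianOfReal_injective : Function.Injective (hermitianOfReal (n := n)) := by
  refine (injective_iff_map_eq_zero _).mpr fun P hP => ?_
  ext i j
  have hij := congr_fun₂ hP i j
  simp only [hermitianOfReal, LinearMap.coe_mk, AddHom.coe_mk, of_apply, zero_apply,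
    Complex.ext_iff, zero_re, zero_im] at hij
  rw [zero_apply]
  linarith [hij.1, hij.2]

variable [Fintype n] [DecidableEq n]

noncomputable def quadraticMeasurement (Φ : ι → EuclideanSpace ℂ n) :
    Matrix n n ℝ →ₗ[ℝ] ι → ℝ where
  toFun P k := re ⟪Φ k, toEuclideanLin (hermitianOfReal P) (Φ k)⟫_ℂ
  map_add' P R := by ext; simp
  map_smul' r P := by
    ext k
    rw [map_smul, ← Complex.coe_smul, map_smul, LinearMap.smul_apply, inner_smul_right,
      re_ofReal_mul]
    rfl

lemma one_lt_finrank_ker_quadraticMeasurement [Fintype ι] (Φ : ι → EuclideanSpace ℂ n)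
    (h : Fintype.card ι + 2 ≤ Fintype.card n ^ 2) :
    1 < finrank ℝ (LinearMap.ker (quadraticMeasurement Φ)) := by
  have hsum := (quadraticMeasurement Φ).finrank_range_add_finrank_ker
  have hrange := (LinearMap.range (quadraticMeasurement Φ)).finrank_le
  simp only [finrank_matrix, finrank_self, mul_one, finrank_fintype_fun_eq_card] at hsum hrange
  nlinarith

theorem exists_mem_ne_zero_re_det_hermitianOfReal_eq_zero (hn : Odd (Fintype.card n))
    {W : Submodule ℝ (Matrix n n ℝ)} (hW : 1 < finrank ℝ W) :
    ∃ P ∈ W, P ≠ 0 ∧ (hermitianOfReal P).det.re = 0 := by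
  have : Nontrivial W := Module.nontrivial_of_finrank_pos (R := ℝ) (by omega)
  obtain ⟨u, hu⟩ := exists_ne (0 : W)
  obtain ⟨v, huv⟩ := exists_linearIndependent_pair_of_one_lt_finrank hW hu
  have hf : Continuous fun P : W => (hermitianOfReal (P : Matrix n n ℝ)).det.re :=
    continuous_re.comp <| (hermitianOfReal.continuous_of_finiteDimensional.comp
      continuous_subtype_val).matrix_det
  obtain ⟨P, hP0, hP⟩ := exists_ne_zero_eq_zero_of_odd hf
    (fun P => by simp [det_neg, hn.neg_one_pow]) huv
  exact ⟨P, P.2, by simpa using hP0, hP⟩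

lemma Matrix.IsHermitian.rank_lt_card_of_re_det_eq_zero {Q : Matrix n n ℂ} (hQ : Q.IsHermitian)
    (h : Q.det.re = 0) : Q.rank < Fintype.card n := by
  rw [hQ.det_eq_prod_eigenvalues] at h
  norm_cast at h
  obtain ⟨i, -, hi⟩ := Finset.prod_eq_zero_iff.mp h
  rw [hQ.rank_eq_card_non_zero_eigs]
  exact Fintype.card_subtype_lt (not_not.mpr hi)

lemma Matrix.IsHermitian.toEuclideanLin_eigenvectorBasis {Q : Matrix n n ℂ}
    (hQ : Q.IsHermitian) (i : n) :
    toEuclideanLin Q (hQ.eigenvectorBasis i) = (hQ.eigenvalues i : ℂ) • hQ.eigenvectorBasis i := by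
  apply WithLp.ofLp_injective
  simpa [Complex.real_smul] using hQ.mulVec_eigenvectorBasis i

theorem Matrix.IsHermitian.not_allowsPhaseRetrieval {Q : Matrix n n ℂ} (hQ : Q.IsHermitian)
    (hQ0 : Q ≠ 0) (hrank : Q.rank ≤ 2) {Φ : ι → EuclideanSpace ℂ n}
    (h : ∀ k, re ⟪Φ k, toEuclideanLin Q (Φ k)⟫_ℂ = 0) : ¬ AllowsPhaseRetrieval Φ := by
  refine not_allowsPhaseRetrieval_of_sum_eq_zero hQ.eigenvectorBasis
    (mt hQ.eigenvalues_eq_zero_iff.mp hQ0) (hQ.rank_eq_card_non_zero_eigs ▸ hrank) fun k => ?_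
  rw [← h k]
  exact (re_inner_apply_self_eq_sum _ _ _ hQ.toEuclideanLin_eigenvectorBasis _).symm

end Hermitian

theorem stmt_12 (N : ℕ) (hN : N < 8) (Φ : Fin N → EuclideanSpace ℂ (Fin 3)) :
    ¬ ∀ x y : EuclideanSpace ℂ (Fin 3),
        (∀ n, ‖(inner ℂ x (Φ n) : ℂ)‖ ^ 2 = ‖(inner ℂ y (Φ n) : ℂ)‖ ^ 2) →
        ∃ c : ℂ, ‖c‖ = 1 ∧ y = c • x := by
  intro hΦ
  obtain ⟨P, hPker, hP0, hdet⟩ := exists_mem_ne_zero_re_det_hermitianOfReal_eq_zero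
    (by decide) (one_lt_finrank_ker_quadraticMeasurement Φ (by simp only [Fintype.card_fin]; omega))
  have hQ := isHermitian_hermitianOfReal P
  exact hQ.not_allowsPhaseRetrieval ((map_ne_zero_iff _ hermitianOfReal_injective).mpr hP0)
    (by simpa [Nat.lt_succ_iff] using hQ.rank_lt_card_of_re_det_eq_zero hdet)
    (fun k => congr_fun hPker k) hΦ
end

section
/- Let f : ℝ^M/{±1} → ℝ^N be bilipschitz with lower constant α > 0 and upper constant β < ∞ (with respect to d(x,y) = min{‖x-y‖, ‖x+y‖}), and f(0) = 0. Then for every x ≠ 0 and every z ∈ ℝ^N, the estimator g = f⁻¹ ∘ P (where P projects onto the closed range of f) satisfies d(g(f(x)+z), x) ≤ (2/α)‖z‖, and hence d(g(f(x)+z), x)/‖x‖ ≤ (2β/α)·‖z‖/‖f(x)‖. -/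
theorem stmt_14 (M N : ℕ) (f : EuclideanSpace ℝ (Fin M) → EuclideanSpace ℝ (Fin N))
    (α β : ℝ) (hα : 0 < α) (hαβ : α ≤ β)
    (hf0 : f 0 = 0)
    (heven : ∀ x, f (-x) = f x)
    (hlow : ∀ x y, α * min ‖x - y‖ ‖x + y‖ ≤ ‖f x - f y‖)
    (hup : ∀ x y, ‖f x - f y‖ ≤ β * min ‖x - y‖ ‖x + y‖)
    (P : EuclideanSpace ℝ (Fin N) → EuclideanSpace ℝ (Fin N))
    (hPrange : ∀ v, P v ∈ Set.range f)
    (hPmin : ∀ v, ∀ w ∈ Set.range f, ‖P v - v‖ ≤ ‖w - v‖)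
    (g : EuclideanSpace ℝ (Fin N) → EuclideanSpace ℝ (Fin M))
    (hg : ∀ v, f (g v) = P v) :
    ∀ x : EuclideanSpace ℝ (Fin M), x ≠ 0 → ∀ z : EuclideanSpace ℝ (Fin N),
      min ‖g (f x + z) - x‖ ‖g (f x + z) + x‖ ≤ (2 / α) * ‖z‖ ∧
      min ‖g (f x + z) - x‖ ‖g (f x + z) + x‖ / ‖x‖ ≤ (2 * β / α) * (‖z‖ / ‖f x‖) := by
  intro x hx z
  set v := f x + z with hv
  set u := g v with hu
  have h1 : ‖f u - v‖ ≤ ‖z‖ := by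
    have h := hPmin v (f x) ⟨x, rfl⟩
    rw [← hg v] at h
    calc ‖f u - v‖ = ‖f (g v) - v‖ := rfl
      _ ≤ ‖f x - v‖ := h
      _ = ‖z‖ := by simp [hv]
  have h2 : ‖f u - f x‖ ≤ 2 * ‖z‖ := by
    have : ‖f u - f x‖ ≤ ‖f u - v‖ + ‖v - f x‖ := norm_sub_le_norm_sub_add_norm_sub _ _ _
    have hz : ‖v - f x‖ = ‖z‖ := by simp [hv]
    linarith
  have hmin : min ‖u - x‖ ‖u + x‖ ≤ (2 / α) * ‖z‖ := by
    have := (hlow u x).trans h2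
    rw [div_mul_eq_mul_div, le_div_iff₀ hα]
    linarith
  refine ⟨hmin, ?_⟩
  have hxpos : 0 < ‖x‖ := norm_pos_iff.mpr hx
  have hfx : α * ‖x‖ ≤ ‖f x‖ := by
    have := hlow x 0
    simpa [hf0] using this
  have hfxpos : 0 < ‖f x‖ := lt_of_lt_of_le (by positivity) hfx
  have hub : ‖f x‖ ≤ β * ‖x‖ := by
    have := hup x 0
    simpa [hf0] using this
  have key : (2 / α) * ‖z‖ / ‖x‖ ≤ (2 * β / α) * (‖z‖ / ‖f x‖) := by
    rw [show (2/α)*‖z‖/‖x‖ = (2*‖z‖)/(α*‖x‖) from by ring,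
      show (2*β/α)*(‖z‖/‖f x‖) = (2*β*‖z‖)/(α*‖f x‖) from by ring,
      div_le_div_iff₀ (by positivity) (by positivity)]
    nlinarith [mul_le_mul_of_nonneg_left hub (by positivity : (0:ℝ) ≤ 2*‖z‖*α)]
  exact (div_le_div_of_nonneg_right hmin hxpos.le |>.trans key)
end

section
/- Let Φ be an M×N real matrix with columns φ_n, define √A by (√A(x))(n) = |⟨x,φ_n⟩|, let α be the optimal lower Lipschitz constant of √A with respect to d(x,y) = min{‖x-y‖, ‖x+y‖}, and let σ be the largest scalar such that Φ has the σ-strong complement property. Then σ ≤ α ≤ √2·σ. -/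
noncomputable def sqA {M N : ℕ} (Φ : Fin N → EuclideanSpace ℝ (Fin M))
    (x : EuclideanSpace ℝ (Fin M)) : EuclideanSpace ℝ (Fin N) :=
  (WithLp.equiv 2 (Fin N → ℝ)).symm fun n => |(inner ℝ x (Φ n) : ℝ)|

/-- `Φ` has the `σ`-strong complement property: for every subset `S` of the index
set, the frame operator of `{φ_n}_{n∈S}` or of `{φ_n}_{n∈Sᶜ}` has smallest
eigenvalue at least `σ²`. -/
def SCP {M N : ℕ} (Φ : Fin N → EuclideanSpace ℝ (Fin M)) (σ : ℝ) : Prop :=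
  ∀ S : Finset (Fin N),
    (∀ u : EuclideanSpace ℝ (Fin M), σ ^ 2 * ‖u‖ ^ 2 ≤ ∑ n ∈ S, (inner ℝ u (Φ n) : ℝ) ^ 2) ∨
    (∀ u : EuclideanSpace ℝ (Fin M), σ ^ 2 * ‖u‖ ^ 2 ≤ ∑ n ∈ Sᶜ, (inner ℝ u (Φ n) : ℝ) ^ 2)


/-!
Both bounds come from one identity: `(|a| - |b|)² = min ((a - b)², (a + b)²)`, so splitting the
index set according to which of `⟨x - y, φ_n⟩²`, `⟨x + y, φ_n⟩²` is smaller gives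
`‖√A(x) - √A(y)‖² = min_S (∑_{n ∈ S} ⟨x + y, φ_n⟩² + ∑_{n ∉ S} ⟨x - y, φ_n⟩²)`.
For `σ ≤ α`, the strong complement property bounds one of the two sums from below by
`σ² ‖x ± y‖²`. For `α ≤ √2 σ`, if `Φ` failed the `α/√2`-strong complement property at `S`,
witnessed by `u` on `S` and `v` on `Sᶜ`, then `x = ‖v‖ u + ‖u‖ v`, `y = ‖v‖ u - ‖u‖ v` satisfy
`‖x - y‖ = ‖x + y‖ = 2 ‖u‖ ‖v‖` while `‖√A(x) - √A(y)‖ < α · 2 ‖u‖ ‖v‖`.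
-/

open Finset

lemma sq_abs_sub_abs_eq_min (a b : ℝ) : (|a| - |b|) ^ 2 = min ((a - b) ^ 2) ((a + b) ^ 2) := by
  have h : (|a| - |b|) ^ 2 = a ^ 2 + b ^ 2 - 2 * |a * b| := by
    rw [sub_sq, sq_abs, sq_abs, abs_mul]
    ring
  rcases abs_cases (a * b) with ⟨hab, hpos⟩ | ⟨hab, hneg⟩
  · rw [min_eq_left (by nlinarith), h, hab]
    ring
  · rw [min_eq_right (by nlinarith), h, hab]
    ring

section sqA

variable {M N : ℕ} (Φ : Fin N → EuclideanSpace ℝ (Fin M)) (x y : EuclideanSpace ℝ (Fin M))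

lemma sq_norm_sqA_sub :
    ‖sqA Φ x - sqA Φ y‖ ^ 2
      = ∑ n, (|(inner ℝ x (Φ n) : ℝ)| - |(inner ℝ y (Φ n) : ℝ)|) ^ 2 := by
  rw [EuclideanSpace.norm_eq, Real.sq_sqrt (by positivity)]
  refine sum_congr rfl fun n _ => ?_
  simp [sqA, sq_abs]

lemma sq_norm_sqA_sub_le (S : Finset (Fin N)) :
    ‖sqA Φ x - sqA Φ y‖ ^ 2
      ≤ ∑ n ∈ S, (inner ℝ (x + y) (Φ n) : ℝ) ^ 2 + ∑ n ∈ Sᶜ, (inner ℝ (x - y) (Φ n) : ℝ) ^ 2 := by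
  rw [sq_norm_sqA_sub, ← sum_add_sum_compl S]
  refine add_le_add (sum_le_sum fun n _ => ?_) (sum_le_sum fun n _ => ?_)
  · rw [sq_abs_sub_abs_eq_min, inner_add_left]
    exact min_le_right _ _
  · rw [sq_abs_sub_abs_eq_min, inner_sub_left]
    exact min_le_left _ _

lemma exists_sq_norm_sqA_sub_eq : ∃ S : Finset (Fin N),
    ‖sqA Φ x - sqA Φ y‖ ^ 2
      = ∑ n ∈ S, (inner ℝ (x + y) (Φ n) : ℝ) ^ 2 + ∑ n ∈ Sᶜ, (inner ℝ (x - y) (Φ n) : ℝ) ^ 2 := by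
  classical
  let S := univ.filter fun n => (inner ℝ (x + y) (Φ n) : ℝ) ^ 2 ≤ (inner ℝ (x - y) (Φ n)) ^ 2
  refine ⟨S, ?_⟩
  rw [sq_norm_sqA_sub, ← sum_add_sum_compl S]
  congr 1
  · refine sum_congr rfl fun n hn => ?_
    rw [sq_abs_sub_abs_eq_min, ← inner_add_left, ← inner_sub_left]
    exact min_eq_right (mem_filter.mp hn).2
  · refine sum_congr rfl fun n hn => ?_
    simp only [S, compl_filter, mem_filter, mem_univ, true_and, not_le] at hn
    rw [sq_abs_sub_abs_eq_min, ← inner_add_left, ← inner_sub_left]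
    exact min_eq_left hn.le

end sqA

lemma sum_sq_inner_smul_left {M N : ℕ} (Φ : Fin N → EuclideanSpace ℝ (Fin M))
    (S : Finset (Fin N)) (c : ℝ) (u : EuclideanSpace ℝ (Fin M)) :
    ∑ n ∈ S, (inner ℝ (c • u) (Φ n) : ℝ) ^ 2 = c ^ 2 * ∑ n ∈ S, (inner ℝ u (Φ n) : ℝ) ^ 2 := by
  simp only [real_inner_smul_left, mul_pow, mul_sum]

lemma SCP.mul_min_norm_le {M N : ℕ} {Φ : Fin N → EuclideanSpace ℝ (Fin M)} {σ : ℝ}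
    (hσ : SCP Φ σ) (x y : EuclideanSpace ℝ (Fin M)) :
    σ * min ‖x - y‖ ‖x + y‖ ≤ ‖sqA Φ x - sqA Φ y‖ := by
  obtain ⟨S, hS⟩ := exists_sq_norm_sqA_sub_eq Φ x y
  have hsq : σ ^ 2 * min ‖x - y‖ ‖x + y‖ ^ 2 ≤ ‖sqA Φ x - sqA Φ y‖ ^ 2 := by
    have h₁ := sum_nonneg fun n (_ : n ∈ S) => sq_nonneg (inner ℝ (x + y) (Φ n) : ℝ)
    have h₂ := sum_nonneg fun n (_ : n ∈ Sᶜ) => sq_nonneg (inner ℝ (x - y) (Φ n) : ℝ)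
    rw [hS]
    rcases hσ S with h | h
    · have := pow_le_pow_left₀ (by positivity) (min_le_right ‖x - y‖ ‖x + y‖) 2
      nlinarith [h (x + y), sq_nonneg σ]
    · have := pow_le_pow_left₀ (by positivity) (min_le_left ‖x - y‖ ‖x + y‖) 2
      nlinarith [h (x - y), sq_nonneg σ]
  exact abs_le_of_sq_le_sq' (by rwa [mul_pow]) (norm_nonneg _) |>.2

lemma SCP_div_sqrt_two_of_mul_min_norm_le {M N : ℕ} {Φ : Fin N → EuclideanSpace ℝ (Fin M)}
    {α : ℝ} (hα : 0 ≤ α)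
    (hlow : ∀ x y : EuclideanSpace ℝ (Fin M), α * min ‖x - y‖ ‖x + y‖ ≤ ‖sqA Φ x - sqA Φ y‖) :
    SCP Φ (α / Real.sqrt 2) := by
  intro S
  by_contra hS
  simp only [not_or, not_forall, not_le] at hS
  obtain ⟨⟨u, hu⟩, ⟨v, hv⟩⟩ := hS
  rw [div_pow, Real.sq_sqrt zero_le_two] at hu hv
  have hu0 : 0 < ‖u‖ := norm_pos_iff.mpr (by rintro rfl; simp at hu)
  have hv0 : 0 < ‖v‖ := norm_pos_iff.mpr (by rintro rfl; simp at hv)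
  set x := ‖v‖ • u + ‖u‖ • v
  set y := ‖v‖ • u - ‖u‖ • v
  have hadd : x + y = (2 * ‖v‖) • u := by module
  have hsub : x - y = (2 * ‖u‖) • v := by module
  have hmin : min ‖x - y‖ ‖x + y‖ = 2 * ‖u‖ * ‖v‖ := by
    rw [hadd, hsub, norm_smul, norm_smul, Real.norm_of_nonneg (by positivity),
      Real.norm_of_nonneg (by positivity)]
    ring_nf
    exact min_self _
  have hupper : ‖sqA Φ x - sqA Φ y‖ ^ 2 < (α * (2 * ‖u‖ * ‖v‖)) ^ 2 := by
    have := sq_norm_sqA_sub_le Φ x y S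
    rw [hadd, hsub, sum_sq_inner_smul_left, sum_sq_inner_smul_left] at this
    have h₁ := mul_lt_mul_of_pos_left hu (by positivity : 0 < (2 * ‖v‖) ^ 2)
    have h₂ := mul_lt_mul_of_pos_left hv (by positivity : 0 < (2 * ‖u‖) ^ 2)
    nlinarith
  have hlower := pow_le_pow_left₀ (by positivity) (hmin ▸ hlow x y) 2
  exact hupper.not_ge hlower

theorem stmt_16_general (M N : ℕ) (Φ : Fin N → EuclideanSpace ℝ (Fin M)) (α σ : ℝ)
    (hαlow : ∀ x y : EuclideanSpace ℝ (Fin M),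
        α * min ‖x - y‖ ‖x + y‖ ≤ ‖sqA Φ x - sqA Φ y‖)
    (hαopt : ∀ α' : ℝ, (∀ x y : EuclideanSpace ℝ (Fin M),
        α' * min ‖x - y‖ ‖x + y‖ ≤ ‖sqA Φ x - sqA Φ y‖) → α' ≤ α)
    (hσ : SCP Φ σ)
    (hσopt : ∀ σ' : ℝ, 0 ≤ σ' → SCP Φ σ' → σ' ≤ σ) :
    σ ≤ α ∧ α ≤ Real.sqrt 2 * σ := by
  refine ⟨hαopt σ hσ.mul_min_norm_le, ?_⟩
  have hα0 : 0 ≤ α := hαopt 0 fun x y => by simp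
  have := hσopt _ (by positivity) (SCP_div_sqrt_two_of_mul_min_norm_le hα0 hαlow)
  rwa [div_le_iff₀ (by positivity), mul_comm] at this

theorem stmt_16 (M N : ℕ) (Φ : Fin N → EuclideanSpace ℝ (Fin M)) (α σ : ℝ)
    (hα0 : 0 ≤ α) (hσ0 : 0 ≤ σ)
    (hαlow : ∀ x y : EuclideanSpace ℝ (Fin M),
        α * min ‖x - y‖ ‖x + y‖ ≤ ‖sqA Φ x - sqA Φ y‖)
    (hαopt : ∀ α' : ℝ, (∀ x y : EuclideanSpace ℝ (Fin M),
        α' * min ‖x - y‖ ‖x + y‖ ≤ ‖sqA Φ x - sqA Φ y‖) → α' ≤ α)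
    (hσ : SCP Φ σ)
    (hσopt : ∀ σ' : ℝ, 0 ≤ σ' → SCP Φ σ' → σ' ≤ σ) :
    σ ≤ α ∧ α ≤ Real.sqrt 2 * σ :=
  stmt_16_general M N Φ α σ hαlow hαopt hσ hσopt
end

section
/- Let Φ = {φ_n}_{n=1}^N ⊆ ℝ^M satisfy the complement property, and for θ ∈ ℝ^M let Ψ(θ) be the M×N matrix whose n-th column is ⟨θ,φ_n⟩φ_n. Then for every nonzero θ ∈ ℝ^M, the matrix J(θ) = (4/σ²)·Ψ(θ)Ψ(θ)ᵀ is positive definite (for any σ > 0). -/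
/-!
For `θ ≠ 0` let `S = {n | ⟨θ, φ_n⟩ = 0}`. The vectors `φ_n`, `n ∈ S`, cannot span, since `θ` would
then be orthogonal to everything; so by the complement property the `φ_n` with `⟨θ, φ_n⟩ ≠ 0` span.
Hence `⟨θ, φ_n⟩⟨x, φ_n⟩ = 0` for all `n` forces `x = 0`, i.e. `Ψ(θ)ᵀ` is injective and
`Ψ(θ) Ψ(θ)ᵀ` is positive definite.
-/

open Matrix

def ComplementProperty (R : Type*) {V ι : Type*} [Semiring R] [AddCommMonoid V] [Module R V]
    (Φ : ι → V) : Prop :=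
  ∀ S : Set ι, Submodule.span R (Φ '' S) = ⊤ ∨ Submodule.span R (Φ '' Sᶜ) = ⊤

variable {R V ι : Type*}

theorem ComplementProperty.span_image_apply_ne_zero [Semiring R] [AddCommMonoid V] [Module R V]
    {Φ : ι → V} (hΦ : ComplementProperty R Φ) {f : V →ₗ[R] R} (hf : f ≠ 0) :
    Submodule.span R (Φ '' {n | f (Φ n) ≠ 0}) = ⊤ := by
  rcases hΦ {n | f (Φ n) = 0} with hspan | hspan
  · refine absurd (LinearMap.ext_on hspan ?_) hf
    rintro _ ⟨n, hn, rfl⟩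
    exact hn
  · simpa only [Set.compl_ofPred] using hspan

theorem eq_zero_of_dotProduct_eq_zero_of_span_eq_top [CommSemiring R] [Fintype ι]
    {s : Set (ι → R)} (hs : Submodule.span R s = ⊤) {x : ι → R}
    (hx : ∀ v ∈ s, x ⬝ᵥ v = 0) : x = 0 := by
  classical
  refine (dotProductEquiv R ι).map_eq_zero_iff.mp (LinearMap.ext_on hs fun v hv => ?_)
  simpa using hx v hv

variable {m : Type*} [Fintype m]

/-- `Ψ(θ)` of the paper: its `n`-th column is `⟨θ, φ_n⟩ φ_n`. -/
def psiMatrix [CommSemiring R] (θ : m → R) (Φ : ι → m → R) : Matrix m ι R :=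
  of fun i n => (θ ⬝ᵥ Φ n) * Φ n i

theorem vecMul_psiMatrix [CommSemiring R] (θ x : m → R) (Φ : ι → m → R) :
    x ᵥ* psiMatrix θ Φ = fun n => (θ ⬝ᵥ Φ n) * (x ⬝ᵥ Φ n) := by
  ext n
  simp only [vecMul, dotProduct, psiMatrix, of_apply, Finset.mul_sum]
  exact Finset.sum_congr rfl fun i _ => by ring

theorem smul_psiMatrix_mul_transpose [CommSemiring R] [Fintype ι] (c : R) (θ : m → R)
    (Φ : ι → m → R) :
    c • (psiMatrix θ Φ * (psiMatrix θ Φ)ᵀ) =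
      of fun i j => c * ∑ n, (θ ⬝ᵥ Φ n) ^ 2 * Φ n i * Φ n j := by
  ext i j
  simp only [psiMatrix, of_apply, Matrix.smul_apply, mul_apply, transpose_apply, smul_eq_mul]
  exact congrArg _ (Finset.sum_congr rfl fun n _ => by ring)

theorem injective_vecMul_psiMatrix [Field R] {Φ : ι → m → R}
    (hΦ : ComplementProperty R Φ) {θ : m → R} (hθ : θ ≠ 0) :
    Function.Injective (psiMatrix θ Φ).vecMul := by
  classical
  have hspan := hΦ.span_image_apply_ne_zero (f := dotProductEquiv R m θ)
    ((dotProductEquiv R m).map_ne_zero_iff.mpr hθ)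
  refine fun x y hxy => sub_eq_zero.mp (eq_zero_of_dotProduct_eq_zero_of_span_eq_top hspan ?_)
  rintro _ ⟨n, hn, rfl⟩
  have hn' : θ ⬝ᵥ Φ n ≠ 0 := hn
  have := congrFun (sub_eq_zero.mpr hxy) n
  rw [← sub_vecMul, vecMul_psiMatrix, Pi.zero_apply] at this
  exact (mul_eq_zero.mp this).resolve_left hn'

theorem stmt_18 (M N : ℕ) (Φ : Fin N → Fin M → ℝ)
    (hCP : ∀ S : Set (Fin N),
        Submodule.span ℝ (Φ '' S) = ⊤ ∨ Submodule.span ℝ (Φ '' Sᶜ) = ⊤)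
    (σ : ℝ) (hσ : 0 < σ) (θ : Fin M → ℝ) (hθ : θ ≠ 0) :
    Matrix.PosDef (Matrix.of fun i j : Fin M =>
      (4 / σ ^ 2) * ∑ n, (θ ⬝ᵥ Φ n) ^ 2 * Φ n i * Φ n j) := by
  rw [← smul_psiMatrix_mul_transpose, ← conjTranspose_eq_transpose_of_trivial]
  exact (PosDef.mul_conjTranspose_self _ (injective_vecMul_psiMatrix hCP hθ)).smul (by positivity)
end
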